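/- If two permutations π and σ of equal length are equivalent under the bidirectional replacement 123 ↔ 132 (here 123 and 132 are ★-patterns containing no ★, so each such replacement preserves length), then π and σ are equivalent under the bidirectional replacement 123 ↔ 13★. -/

import Mathlib

/-!
Pattern-replacement equivalences between permutations of different lengths
(arXiv:1309.4802). A ★-pattern is encoded as a `List (Option ℕ)`, where `none`
is the placeholder ★ and `some k` an integer entry.
-/

/-- A ★-pattern / star-string entry: `none` is ★, `some k` an integer `k`. -/
abbrev SPat := List (Option ℕ)

/-- The integer entries of a star-string, in order. -/
def ints (ρ : SPat) : List ℕ := ρ.filterMap id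

/-- Two lists of naturals are order-isomorphic. -/
def OrdIso (u v : List ℕ) : Prop :=
  u.length = v.length ∧
  ∀ i j, i < u.length → j < u.length → (u.getD i 0 < u.getD j 0 ↔ v.getD i 0 < v.getD j 0)

/-- A valid string of distinct positive integers and ★'s. -/
def StarStr (ρ : SPat) : Prop := (ints ρ).Nodup ∧ ∀ k ∈ ints ρ, 0 < k

/-- `r` (entry by entry) forms a copy of the ★-pattern `δ`: ★'s in the same
positions, and the integer entries order-isomorphic. -/
def IsCopy (r δ : SPat) : Prop :=
  r.length = δ.length ∧
  (∀ i, (r.getD i none = none ↔ δ.getD i none = none)) ∧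
  OrdIso (ints r) (ints δ)

/-- `Repl a b ρ₁ ρ₂` : `ρ₂` is obtained from `ρ₁` by replacing an occurrence of `a`
as a (not necessarily contiguous) substring of `ρ₁` by `b`, entry by entry at the
same positions. -/
inductive Repl : SPat → SPat → SPat → SPat → Prop
  | nil : Repl [] [] [] []
  | keep {a b ρ₁ ρ₂} (x : Option ℕ) : Repl a b ρ₁ ρ₂ → Repl a b (x :: ρ₁) (x :: ρ₂)
  | repl {a b ρ₁ ρ₂} (x y : Option ℕ) :
      Repl a b ρ₁ ρ₂ → Repl (x :: a) (y :: b) (x :: ρ₁) (y :: ρ₂)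

/-- `π` is a permutation of `1, …, n` (as a list). -/
def IsPermList (π : List ℕ) : Prop := π.Perm (List.range' 1 π.length)

/-- `σ` is a result of the replacement `α → β` applied to the permutation `π`:
(1) `ρ₁` is `π` renumbered (order-isomorphically) with ★'s inserted anywhere;
(2) a substring `a` of `ρ₁` forming a copy of `α` is replaced (in place) by a
string `b` that is a copy of `β`, whose integers meet `ρ₁` only inside `a`, and
which agrees with `a` on the integer entries common to `α` and `β`;
(3) dropping ★'s and renumbering gives the permutation `σ`. -/
def IsResult (α β : SPat) (π σ : List ℕ) : Prop :=
  ∃ ρ₁ ρ₂ a b : SPat,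
    StarStr ρ₁ ∧ OrdIso π (ints ρ₁) ∧
    IsCopy a α ∧
    StarStr b ∧ IsCopy b β ∧
    (∀ k ∈ ints b, k ∈ ints ρ₁ → k ∈ ints a) ∧
    (∀ i j x, α.getD i none = some x → β.getD j none = some x →
      a.getD i none = b.getD j none) ∧
    Repl a b ρ₁ ρ₂ ∧
    IsPermList σ ∧ OrdIso (ints ρ₂) σ

/-- Equivalence under the bidirectional replacement `α ↔ β`: a finite sequence
of `α → β` and `β → α` replacements. -/
def PermEquiv (α β : SPat) (π σ : List ℕ) : Prop :=
  Relation.ReflTransGen (fun τ υ => IsResult α β τ υ ∨ IsResult β α τ υ) π σ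

/-- `π` is isolated under `α ↔ β`: no other permutation is equivalent to it. -/
def Isolated (α β : SPat) (π : List ℕ) : Prop :=
  ∀ σ : List ℕ, IsPermList σ → PermEquiv α β π σ → σ = π

/-- The identity permutation `1 2 ⋯ n`. -/
def idPerm (n : ℕ) : List ℕ := List.range' 1 n

/-- The reverse identity permutation `n (n-1) ⋯ 1`. -/
def ridPerm (n : ℕ) : List ℕ := (List.range' 1 n).reverse

def pat123 : SPat := [some 1, some 2, some 3]
def pat132 : SPat := [some 1, some 3, some 2]
def patS32 : SPat := [none, some 3, some 2]
def pat3S2 : SPat := [some 3, none, some 2]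
def pat32S : SPat := [some 3, some 2, none]
def patS31 : SPat := [none, some 3, some 1]
def pat3S1 : SPat := [some 3, none, some 1]
def pat31S : SPat := [some 3, some 1, none]
def patS21 : SPat := [none, some 2, some 1]
def pat2S1 : SPat := [some 2, none, some 1]
def pat21S : SPat := [some 2, some 1, none]
def pat12S : SPat := [some 1, some 2, none]
def pat1S3 : SPat := [some 1, none, some 3]
def patS23 : SPat := [none, some 2, some 3]
def patS12 : SPat := [none, some 1, some 2]
def pat23S : SPat := [some 2, some 3, none]
def pat13S : SPat := [some 1, some 3, none]
def pat1S2 : SPat := [some 1, none, some 2]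

/-!
A replacement `123 → 132` or `132 → 123` exchanges two entries `u`, `v` that both lie to the
right of, and above, an entry `p`. Such an exchange is a composite of two `123 ↔ 13★`
replacements, once there is room for a value `m` just above `p`: with a `★` inserted right after
`v`, the replacement `p u ★ → p m u` (from `13★` to `123`) moves `u` behind `v` and leaves `m` in
its place, and then `p m v → p v ★` (from `123` to `13★`) deletes `m` and puts `v` where it was.
-/

open List

section Ints

@[simp] lemma ints_nil : ints [] = [] := rfl

@[simp] lemma ints_append (u v : SPat) : ints (u ++ v) = ints u ++ ints v := by
  simp [ints]

@[simp] lemma ints_cons_some (x : ℕ) (u : SPat) : ints (some x :: u) = x :: ints u := by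
  simp [ints]

@[simp] lemma ints_cons_none (u : SPat) : ints (none :: u) = ints u := by
  simp [ints]

@[simp] lemma ints_map_some (l : List ℕ) : ints (l.map some) = l := by
  induction l <;> simp [*]

end Ints

section OrdIso

lemma OrdIso.symm {u v : List ℕ} (h : OrdIso u v) : OrdIso v u :=
  ⟨h.1.symm, fun i j hi hj => (h.2 i j (h.1 ▸ hi) (h.1 ▸ hj)).symm⟩

lemma OrdIso.trans {u v w : List ℕ} (h₁ : OrdIso u v) (h₂ : OrdIso v w) : OrdIso u w :=
  ⟨h₁.1.trans h₂.1, fun i j hi hj =>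
    (h₁.2 i j hi hj).trans (h₂.2 i j (h₁.1 ▸ hi) (h₁.1 ▸ hj))⟩

lemma ordIso_map_of_strictMonoOn {f : ℕ → ℕ} (l : List ℕ) (hf : StrictMonoOn f {x | x ∈ l}) :
    OrdIso l (l.map f) := by
  refine ⟨(length_map f).symm, fun i j hi hj => ?_⟩
  rw [getD_eq_getElem _ _ hi, getD_eq_getElem _ _ hj, getD_eq_getElem _ _ (by simpa using hi),
    getD_eq_getElem _ _ (by simpa using hj), getElem_map, getElem_map]
  exact (hf.lt_iff_lt (getElem_mem hi) (getElem_mem hj)).symm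

lemma ordIso_of_sortedLT {u v : List ℕ} (hu : u.SortedLT) (hv : v.SortedLT)
    (hl : u.length = v.length) : OrdIso u v := by
  refine ⟨hl, fun i j hi hj => ?_⟩
  rw [getD_eq_getElem _ _ hi, getD_eq_getElem _ _ hj, getD_eq_getElem _ _ (hl ▸ hi),
    getD_eq_getElem _ _ (hl ▸ hj), hu.getElem_lt_getElem_iff, hv.getElem_lt_getElem_iff]

end OrdIso

section Standardization

def rank (s : Finset ℕ) (x : ℕ) : ℕ := (s.filter (· < x)).card

lemma rank_strictMonoOn (s : Finset ℕ) : StrictMonoOn (rank s) s := by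
  intro x hx y _ hxy
  refine Finset.card_lt_card ⟨Finset.monotone_filter_right s (fun _ _ h => h.trans hxy), ?_⟩
  intro h
  simpa using h (Finset.mem_filter.2 ⟨hx, hxy⟩)

lemma rank_lt_card {s : Finset ℕ} {x : ℕ} (hx : x ∈ s) : rank s x < s.card :=
  Finset.card_lt_card (Finset.filter_ssubset.2 ⟨x, hx, lt_irrefl x⟩)

def std (l : List ℕ) : List ℕ := l.map (fun x => rank l.toFinset x + 1)

lemma ordIso_std (l : List ℕ) : OrdIso l (std l) :=
  ordIso_map_of_strictMonoOn l fun _ hx _ hy hxy =>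
    Nat.succ_lt_succ (rank_strictMonoOn _ (by simpa using hx) (by simpa using hy) hxy)

lemma isPermList_std {l : List ℕ} (hl : l.Nodup) : IsPermList (std l) := by
  have hinj : Set.InjOn (fun x => rank l.toFinset x + 1) {x | x ∈ l} := fun x hx y hy h =>
    (rank_strictMonoOn l.toFinset).injOn (by simpa using hx) (by simpa using hy) (by simpa using h)
  refine (subperm_of_subset (hl.map_on hinj) fun z hz => ?_).perm_of_length_le (by simp [std])
  obtain ⟨x, hx, rfl⟩ := mem_map.1 hz
  have := rank_lt_card (s := l.toFinset) (by simpa using hx)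
  rw [toFinset_card_of_nodup hl] at this
  simp only [std, length_map, mem_range']
  exact ⟨rank l.toFinset x, this, by ring⟩

lemma exists_isPermList_ordIso {l : List ℕ} (hl : l.Nodup) : ∃ π, IsPermList π ∧ OrdIso l π :=
  ⟨std l, isPermList_std hl, ordIso_std l⟩

end Standardization

section Repl

lemma Repl.eq_of_nil {a b ρ₁ ρ₂ : SPat} (h : Repl a b ρ₁ ρ₂) (ha : a = []) (hb : b = []) :
    ρ₁ = ρ₂ := by
  induction h with
  | nil => rfl
  | keep x _ ih => rw [ih ha hb]
  | repl => simp at ha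

lemma Repl.exists_of_cons {a b ρ₁ ρ₂ : SPat} (h : Repl a b ρ₁ ρ₂) {x y : Option ℕ} {a' b' : SPat}
    (ha : a = x :: a') (hb : b = y :: b') :
    ∃ A ρ₁' ρ₂', ρ₁ = A ++ x :: ρ₁' ∧ ρ₂ = A ++ y :: ρ₂' ∧ Repl a' b' ρ₁' ρ₂' := by
  induction h with
  | nil => simp at ha
  | keep z _ ih =>
    obtain ⟨A, ρ₁', ρ₂', rfl, rfl, h⟩ := ih ha hb
    exact ⟨z :: A, ρ₁', ρ₂', rfl, rfl, h⟩
  | repl z w h =>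
    obtain ⟨rfl, rfl⟩ := cons_eq_cons.1 ha
    obtain ⟨rfl, rfl⟩ := cons_eq_cons.1 hb
    exact ⟨[], _, _, rfl, rfl, h⟩

lemma Repl.exists_of_three {x₁ x₂ x₃ y₁ y₂ y₃ : Option ℕ} {ρ₁ ρ₂ : SPat}
    (h : Repl [x₁, x₂, x₃] [y₁, y₂, y₃] ρ₁ ρ₂) :
    ∃ A B C D : SPat,
      ρ₁ = A ++ x₁ :: (B ++ x₂ :: (C ++ x₃ :: D)) ∧
      ρ₂ = A ++ y₁ :: (B ++ y₂ :: (C ++ y₃ :: D)) := by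
  obtain ⟨A, _, _, rfl, rfl, h₁⟩ := h.exists_of_cons rfl rfl
  obtain ⟨B, _, _, rfl, rfl, h₂⟩ := h₁.exists_of_cons rfl rfl
  obtain ⟨C, D, _, rfl, rfl, h₃⟩ := h₂.exists_of_cons rfl rfl
  obtain rfl := h₃.eq_of_nil rfl rfl
  exact ⟨A, B, C, D, rfl, rfl⟩

lemma Repl.append_left {a b ρ₁ ρ₂ : SPat} (A : SPat) (h : Repl a b ρ₁ ρ₂) :
    Repl a b (A ++ ρ₁) (A ++ ρ₂) := by
  induction A with
  | nil => exact h
  | cons x _ ih => exact ih.keep x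

lemma Repl.nil_refl (D : SPat) : Repl [] [] D D := by
  simpa using Repl.nil.append_left D

lemma Repl.three (x₁ x₂ x₃ y₁ y₂ y₃ : Option ℕ) (A B C D : SPat) :
    Repl [x₁, x₂, x₃] [y₁, y₂, y₃]
      (A ++ x₁ :: (B ++ x₂ :: (C ++ x₃ :: D))) (A ++ y₁ :: (B ++ y₂ :: (C ++ y₃ :: D))) :=
  (((((Repl.nil_refl D).repl x₃ y₃).append_left C).repl x₂ y₂).append_left B |>.repl x₁ y₁)
    |>.append_left A

end Repl

section Copies

lemma isCopy_pat123 {x y z : ℕ} (hxy : x < y) (hyz : y < z) :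
    IsCopy [some x, some y, some z] pat123 := by
  refine ⟨rfl, fun i => ?_, ordIso_of_sortedLT ?_ ?_ rfl⟩
  · rcases i with _ | _ | _ | i <;> simp [pat123]
  · simp [ints, sortedLT_iff_pairwise]; omega
  · simp [ints, pat123, sortedLT_iff_pairwise]

lemma isCopy_pat13S {x y : ℕ} (hxy : x < y) : IsCopy [some x, some y, none] pat13S := by
  refine ⟨rfl, fun i => ?_, ordIso_of_sortedLT ?_ ?_ rfl⟩
  · rcases i with _ | _ | _ | i <;> simp [pat13S]
  · simpa [ints, sortedLT_iff_pairwise] using hxy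
  · simp [ints, pat13S, sortedLT_iff_pairwise]

lemma IsCopy.exists_of_first_least {a : SPat} {s t : ℕ} (h : IsCopy a [some 1, some s, some t])
    (hs : 1 < s) (ht : 1 < t) : ∃ x y z, a = [some x, some y, some z] ∧ x < y ∧ x < z := by
  obtain ⟨hl, hstar, hord⟩ := h
  match a, hl with
  | [some x, some y, some z], _ =>
    refine ⟨x, y, z, rfl, ?_, ?_⟩
    · simpa [ints, hs] using hord.2 0 1
    · simpa [ints, ht] using hord.2 0 2
  | [none, _, _], _ => simpa using hstar 0
  | [some _, none, _], _ => simpa using hstar 1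
  | [some _, some _, none], _ => simpa using hstar 2

end Copies

section Steps

def SwapAbove (τ υ : List ℕ) : Prop :=
  ∃ (A B C D : List ℕ) (p u v : ℕ), p < u ∧ p < v ∧
    (A ++ p :: (B ++ u :: (C ++ v :: D))).Nodup ∧
    OrdIso τ (A ++ p :: (B ++ u :: (C ++ v :: D))) ∧
    OrdIso (A ++ p :: (B ++ v :: (C ++ u :: D))) υ ∧ IsPermList υ

lemma swapAbove_of_isResult {s t : ℕ} (hs : 1 < s) (ht : 1 < t) {τ υ : List ℕ}
    (h : IsResult [some 1, some s, some t] [some 1, some t, some s] τ υ) : SwapAbove τ υ := by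
  obtain ⟨ρ₁, ρ₂, a, b, hρ₁, hτ, ha, -, hb, -, hagree, hrepl, hυ, hρ₂υ⟩ := h
  obtain ⟨p, u, v, rfl, hpu, hpv⟩ := ha.exists_of_first_least hs ht
  have hb₀ := hagree 0 0 1 rfl rfl
  have hb₁ := hagree 2 1 t rfl rfl
  have hb₂ := hagree 1 2 s rfl rfl
  match b, hb.1 with
  | [_, _, _], _ =>
    simp only [getD_cons_zero, getD_cons_succ] at hb₀ hb₁ hb₂
    subst hb₀ hb₁ hb₂
    obtain ⟨A, B, C, D, rfl, rfl⟩ := hrepl.exists_of_three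
    simp only [StarStr, ints_append, ints_cons_some] at hρ₁ hτ hρ₂υ
    exact ⟨ints A, ints B, ints C, ints D, p, u, v, hpu, hpv, hρ₁.1, hτ, hρ₂υ, hυ⟩

lemma isResult_pat13S_pat123 {π μ A B C D : List ℕ} {p u m : ℕ} (hpm : p < m) (hmu : m < u)
    (hnd : (A ++ p :: (B ++ u :: (C ++ D))).Nodup)
    (hpos : ∀ x ∈ A ++ p :: (B ++ u :: (C ++ D)), 0 < x)
    (hm : m ∉ A ++ p :: (B ++ u :: (C ++ D)))
    (hπ : OrdIso π (A ++ p :: (B ++ u :: (C ++ D))))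
    (hμ : IsPermList μ) (hμ' : OrdIso (A ++ p :: (B ++ m :: (C ++ u :: D))) μ) :
    IsResult pat13S pat123 π μ := by
  refine ⟨A.map some ++ some p :: (B.map some ++ some u :: (C.map some ++ none :: D.map some)),
    A.map some ++ some p :: (B.map some ++ some m :: (C.map some ++ some u :: D.map some)),
    [some p, some u, none], [some p, some m, some u], ⟨by simpa using hnd, by simpa using hpos⟩,
    by simpa using hπ, isCopy_pat13S (hpm.trans hmu), ⟨?_, ?_⟩, isCopy_pat123 hpm hmu, ?_, ?_,
    Repl.three _ _ _ _ _ _ _ _ _ _, hμ, by simpa using hμ'⟩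
  · simp only [ints_cons_some, ints_nil, nodup_cons, mem_cons, not_mem_nil, or_false, not_or,
      not_false_eq_true, nodup_nil, and_self, and_true]
    omega
  · have := hpos p (by simp)
    simp only [ints_cons_some, ints_nil, mem_cons, not_mem_nil, or_false, forall_eq_or_imp,
      forall_eq]
    omega
  · simp only [ints_cons_some, ints_cons_none, ints_nil, mem_cons, not_mem_nil, or_false,
      ints_append, ints_map_some]
    rintro k (rfl | rfl | rfl) hk
    · exact .inl rfl
    · exact absurd hk hm
    · exact .inr rfl
  · intro i j x hi hj
    rcases i with _ | _ | _ | i <;> rcases j with _ | _ | _ | j <;>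
      simp [pat13S, pat123] at hi hj ⊢ <;> omega

lemma isResult_pat123_pat13S {π σ A B C D : List ℕ} {p m v : ℕ} (hpm : p < m) (hmv : m < v)
    (hnd : (A ++ p :: (B ++ m :: (C ++ v :: D))).Nodup)
    (hpos : ∀ x ∈ A ++ p :: (B ++ m :: (C ++ v :: D)), 0 < x)
    (hπ : OrdIso π (A ++ p :: (B ++ m :: (C ++ v :: D))))
    (hσ : IsPermList σ) (hσ' : OrdIso (A ++ p :: (B ++ v :: (C ++ D))) σ) :
    IsResult pat123 pat13S π σ := by
  refine ⟨A.map some ++ some p :: (B.map some ++ some m :: (C.map some ++ some v :: D.map some)),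
    A.map some ++ some p :: (B.map some ++ some v :: (C.map some ++ none :: D.map some)),
    [some p, some m, some v], [some p, some v, none], ⟨by simpa using hnd, by simpa using hpos⟩,
    by simpa using hπ, isCopy_pat123 hpm hmv, ⟨?_, ?_⟩, isCopy_pat13S (hpm.trans hmv), ?_, ?_,
    Repl.three _ _ _ _ _ _ _ _ _ _, hσ, by simpa using hσ'⟩
  · simp only [ints_cons_some, ints_cons_none, ints_nil, nodup_cons, mem_cons, not_mem_nil,
      or_false, not_false_eq_true, nodup_nil, and_self, and_true]
    omega
  · have := hpos p (by simp)
    simp only [ints_cons_some, ints_cons_none, ints_nil, mem_cons, not_mem_nil, or_false,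
      forall_eq_or_imp, forall_eq]
    omega
  · simp only [ints_cons_some, ints_cons_none, ints_nil, mem_cons, not_mem_nil, or_false]
    omega
  · intro i j x hi hj
    rcases i with _ | _ | _ | i <;> rcases j with _ | _ | _ | j <;>
      simp [pat13S, pat123] at hi hj ⊢ <;> omega

lemma permEquiv_of_swap_of_fresh {τ υ A B C D : List ℕ} {p u v m : ℕ} (hpm : p < m) (hmu : m < u)
    (hmv : m < v) (hnd : (A ++ p :: (B ++ u :: (C ++ v :: D))).Nodup)
    (hpos : ∀ x ∈ A ++ p :: (B ++ u :: (C ++ v :: D)), 0 < x)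
    (hm : m ∉ A ++ p :: (B ++ u :: (C ++ v :: D)))
    (hτ : OrdIso τ (A ++ p :: (B ++ u :: (C ++ v :: D))))
    (hυ : IsPermList υ) (hυ' : OrdIso (A ++ p :: (B ++ v :: (C ++ u :: D))) υ) :
    PermEquiv pat123 pat13S τ υ := by
  have hperm : (A ++ p :: (B ++ m :: (C ++ v :: u :: D))).Perm
      (m :: (A ++ p :: (B ++ u :: (C ++ v :: D)))) := by
    rw [perm_iff_count]
    intro a
    simp only [count_append, count_cons]
    omega
  have hM : (A ++ p :: (B ++ m :: (C ++ v :: u :: D))).Nodup :=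
    hperm.nodup_iff.2 (nodup_cons.2 ⟨hm, hnd⟩)
  have hMpos : ∀ x ∈ A ++ p :: (B ++ m :: (C ++ v :: u :: D)), 0 < x := fun x hx =>
    (mem_cons.1 (hperm.subset hx)).elim (fun h => h ▸ Nat.zero_lt_of_lt hpm) (hpos x)
  obtain ⟨μ, hμ, hMμ⟩ := exists_isPermList_ordIso hM
  refine .tail (b := μ) (.single (Or.inr ?_)) (Or.inl ?_)
  · exact isResult_pat13S_pat123 (C := C ++ [v]) hpm hmu (by simpa using hnd) (by simpa using hpos)
      (by simpa using hm) (by simpa using hτ) hμ (by simpa using hMμ)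
  · exact isResult_pat123_pat13S (D := u :: D) hpm hmv hM hMpos hMμ.symm hυ hυ'

lemma SwapAbove.permEquiv {τ υ : List ℕ} (h : SwapAbove τ υ) : PermEquiv pat123 pat13S τ υ := by
  obtain ⟨A, B, C, D, p, u, v, hpu, hpv, hnd, hτ, hυ', hυ⟩ := h
  -- doubling the entries leaves the odd value `g p + 1` free just above `g p`
  set g : ℕ → ℕ := (2 * · + 2) with hg
  have hg_mono : StrictMono g := fun x y (hxy : x < y) => by simp only [hg]; omega
  have hg_gap {x y : ℕ} (hxy : x < y) : g x + 1 < g y := by simp only [hg]; omega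
  have hmap (l : List ℕ) : OrdIso l (l.map g) :=
    ordIso_map_of_strictMonoOn l (hg_mono.strictMonoOn _)
  have hpos : ∀ x ∈ (A ++ p :: (B ++ u :: (C ++ v :: D))).map g, 0 < x := by
    simp only [forall_mem_map, hg]
    omega
  have hfresh : g p + 1 ∉ (A ++ p :: (B ++ u :: (C ++ v :: D))).map g := by
    simp only [hg, mem_map, not_exists, not_and]
    omega
  refine permEquiv_of_swap_of_fresh (A := A.map g) (B := B.map g) (C := C.map g) (D := D.map g)
    (m := g p + 1) (Nat.lt_succ_self _) (hg_gap hpu) (hg_gap hpv)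
    (by simpa using hnd.map hg_mono.injective) (by simpa using hpos) (by simpa using hfresh)
    (by simpa using hτ.trans (hmap _)) hυ (by simpa using (hmap _).symm.trans hυ')

end Steps

theorem equiv132_implies_equiv13star_general (π σ : List ℕ)
    (h : PermEquiv pat123 pat132 π σ) :
    PermEquiv pat123 pat13S π σ :=
  Relation.reflTransGen_closed (fun _ _ hstep => hstep.elim
    (fun h => (swapAbove_of_isResult (by norm_num) (by norm_num) h).permEquiv)
    (fun h => (swapAbove_of_isResult (by norm_num) (by norm_num) h).permEquiv)) π σ h

/-- if two permutations of equal length are equivalent under the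
(length-preserving) bidirectional replacement `123 ↔ 132`, then they are
equivalent under `123 ↔ 13★`. -/
theorem equiv132_implies_equiv13star (π σ : List ℕ) (hπ : IsPermList π)
    (hσ : IsPermList σ) (hlen : π.length = σ.length)
    (h : PermEquiv pat123 pat132 π σ) :
    PermEquiv pat123 pat13S π σ :=
  equiv132_implies_equiv13star_general π σ h
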